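/- arXiv:2302.11973 — 5 statements merged into one kernel-verified Lean document; each statement's English description precedes it below -/
import Mathlib

section
/- For every ψ ∈ C^∞[-1,1], the maximum of A₁ψ(t) = ψ(t) - t·ψ'(t) over [-1,1] is at most the maximum over [-1,1] of the function □ₙψ(t) = (1/(n-1))(1-t²)ψ''(t) + ψ(t) - t·ψ'(t), where n ≥ 3 is a fixed integer. -/
open scoped ContDiff


/-- For every smooth `ψ` on `[-1,1]`, the maximum of `A₁ψ(t) = ψ(t) - tψ'(t)` over `[-1,1]`
is at most the maximum over `[-1,1]` of
`□ₙψ(t) = (1/(n-1))(1-t²)ψ''(t) + ψ(t) - tψ'(t)`, where `n ≥ 3`. -/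
theorem A1_max_le_box_max (n : ℕ) (hn : 3 ≤ n) (ψ : ℝ → ℝ) (hψ : ContDiff ℝ (⊤ : ℕ∞) ψ) :
    sSup ((fun t => ψ t - t * deriv ψ t) '' Set.Icc (-1 : ℝ) 1) ≤
      sSup ((fun t =>
        (1 / ((n : ℝ) - 1)) * (1 - t ^ 2) * iteratedDeriv 2 ψ t + ψ t - t * deriv ψ t) ''
        Set.Icc (-1 : ℝ) 1) := by
  set g : ℝ → ℝ := fun t => ψ t - t * deriv ψ t with hg_def
  set f : ℝ → ℝ := iteratedDeriv 2 ψ with hf_def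
  set c : ℝ := 1 / ((n : ℝ) - 1) with hc_def
  set B : ℝ → ℝ := fun t => c * (1 - t ^ 2) * f t + ψ t - t * deriv ψ t with hB_def
  have hn3 : (3 : ℝ) ≤ (n : ℝ) := by exact_mod_cast hn
  have hc : 0 < c := by rw [hc_def]; apply one_div_pos.mpr; linarith
  have hψ1 : Differentiable ℝ ψ := hψ.differentiable (by simp)
  have hdψ : ContDiff ℝ ∞ (deriv ψ) := (contDiff_infty_iff_deriv.mp (hψ.of_le (by simp))).2
  have hψ2 : Differentiable ℝ (deriv ψ) := hdψ.differentiable (by simp)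
  have hf_eq : f = deriv (deriv ψ) := by
    rw [hf_def, iteratedDeriv_succ, iteratedDeriv_one]
  have hf_cont : Continuous f := by
    rw [hf_eq]; exact (contDiff_infty_iff_deriv.mp hdψ).2.continuous
  have hg' : ∀ t : ℝ, HasDerivAt g (-(t * f t)) t := by
    intro t
    have h1 : HasDerivAt ψ (deriv ψ t) t := (hψ1 t).hasDerivAt
    have h2 : HasDerivAt (fun t => t * deriv ψ t)
        (1 * deriv ψ t + t * deriv (deriv ψ) t) t :=
      (hasDerivAt_id t).mul (hψ2 t).hasDerivAt
    have h3 : HasDerivAt g (deriv ψ t - (1 * deriv ψ t + t * deriv (deriv ψ) t)) t :=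
      h1.sub h2
    convert h3 using 1
    rw [hf_eq]; ring
  have hg_cont : Continuous g := hψ1.continuous.sub (continuous_id.mul hdψ.continuous)
  have hB_cont : Continuous B := by
    apply Continuous.sub
    · exact ((continuous_const.mul (by continuity : Continuous fun t : ℝ => 1 - t ^ 2)).mul
        hf_cont).add hψ1.continuous
    · exact continuous_id.mul hdψ.continuous
  have hK : IsCompact (Set.Icc (-1 : ℝ) 1) := isCompact_Icc
  have hne : (Set.Icc (-1 : ℝ) 1).Nonempty := ⟨0, by norm_num⟩
  obtain ⟨t₀, ht₀, hmax⟩ := hK.exists_isMaxOn hne hg_cont.continuousOn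
  have hLHS : sSup (g '' Set.Icc (-1 : ℝ) 1) = g t₀ := by
    apply IsGreatest.csSup_eq
    constructor
    · exact Set.mem_image_of_mem _ ht₀
    · rintro y ⟨x, hx, rfl⟩
      exact hmax hx
  rw [hLHS]
  have hbdd : BddAbove (B '' Set.Icc (-1 : ℝ) 1) :=
    (hK.image hB_cont).bddAbove
  by_contra hcon
  push_neg at hcon
  have hBt₀ : B t₀ ≤ sSup (B '' Set.Icc (-1 : ℝ) 1) :=
    le_csSup hbdd (Set.mem_image_of_mem _ ht₀)
  have hkey : c * (1 - t₀ ^ 2) * f t₀ < 0 := by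
    have h1 : B t₀ < g t₀ := lt_of_le_of_lt hBt₀ hcon
    simp only [hB_def, hg_def] at h1
    linarith
  have hsq : 0 ≤ 1 - t₀ ^ 2 := by
    have h1 := ht₀.1; have h2 := ht₀.2; nlinarith
  have hsqpos : 0 < 1 - t₀ ^ 2 := by
    rcases hsq.lt_or_eq with h | h
    · exact h
    · exfalso; rw [← h] at hkey; simp at hkey
  have hf0 : f t₀ < 0 := by
    by_contra h
    push_neg at h
    nlinarith [mul_nonneg (mul_nonneg hc.le hsq) h]
  have ht₀Ioo : t₀ ∈ Set.Ioo (-1 : ℝ) 1 := by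
    have habs : |t₀| < 1 := by
      rw [← sq_abs] at hsqpos
      nlinarith [abs_nonneg t₀]
    exact ⟨by linarith [abs_lt.mp habs |>.1], by linarith [abs_lt.mp habs |>.2]⟩
  by_cases ht0 : t₀ = 0
  · -- t₀ = 0 : g is strictly increasing to the right of 0, contradiction
    subst ht0
    have hopen : IsOpen (f ⁻¹' Set.Iio 0) := isOpen_Iio.preimage hf_cont
    obtain ⟨ε, hε, hball⟩ := Metric.isOpen_iff.mp hopen 0 hf0
    set δ : ℝ := min (ε / 2) (1 / 2) with hδ_def
    have hδpos : 0 < δ := by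
      apply lt_min <;> linarith
    have hδε : δ < ε := lt_of_le_of_lt (min_le_left _ _) (by linarith)
    have hδ1 : δ ≤ 1 / 2 := min_le_right _ _
    have hmono : StrictMonoOn g (Set.Icc 0 δ) := by
      apply strictMonoOn_of_deriv_pos (convex_Icc 0 δ) hg_cont.continuousOn
      intro x hx
      rw [interior_Icc] at hx
      have hxε : f x < 0 := by
        apply hball
        rw [Metric.mem_ball, Real.dist_eq, sub_zero, abs_of_pos hx.1]
        linarith [hx.2]
      rw [(hg' x).deriv]
      nlinarith [hx.1]
    have hδIcc : δ ∈ Set.Icc (-1 : ℝ) 1 := ⟨by linarith, by linarith⟩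
    have h1 : g 0 < g δ := hmono (Set.left_mem_Icc.mpr hδpos.le)
      (Set.right_mem_Icc.mpr hδpos.le) hδpos
    have h2 : g δ ≤ g 0 := hmax hδIcc
    linarith
  · -- t₀ ≠ 0 : interior max gives deriv g t₀ = 0, but deriv g t₀ = -t₀ f t₀ ≠ 0
    have hloc : IsLocalMax g t₀ := hmax.isLocalMax (Icc_mem_nhds ht₀Ioo.1 ht₀Ioo.2)
    have hd0 : deriv g t₀ = 0 := hloc.deriv_eq_zero
    rw [(hg' t₀).deriv] at hd0
    have : t₀ * f t₀ = 0 := by linarith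
    rcases mul_eq_zero.mp this with h | h
    · exact ht0 h
    · linarith
end

section
/- Let n ≥ 3 and k ≥ 2, and let Pⁿₖ denote the Legendre polynomial of dimension n and degree k, normalized so that Pⁿₖ(1) = 1. Then (n-1)/((k-1)(k+n-1)) · A₁Pⁿₖ equals the convex combination -(k/(2k+n-2))·Pⁿ⁺²ₖ₋₂ - ((k+n-2)/(2k+n-2))·Pⁿ⁺²ₖ, where A₁ψ(t) = ψ(t) - tψ'(t). -/
/-! Write `L_{α,μ} f = (1 - X²) f'' - α X f' + μ f`, so that `Pⁿₖ` solves `L_{n-1, k(k+n-2)}`.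
Differentiating gives `(L_{α,μ} f)' = L_{α+2,μ-α} f'`. Hence, when `L_{α,μ} f = 0`, each
operator `L_{α+2,ν}` maps the plane spanned by `f` and `A₁ f` into itself, and for
`μ = k(k + n - 2)` the eigenvalues of degree `k - 2` and `k` in dimension `n + 2` are exactly the
`ν` that make it singular, with kernels spanned by `(k - 1) f + A₁ f` and `A₁ f - (k + n - 1) f`.
A polynomial solution of a Legendre equation is determined by its value at `1`, so these are
multiples of `Pⁿ⁺²ₖ₋₂` and `Pⁿ⁺²ₖ`; the constants follow from `(n - 1) P'(1) = k(k + n - 2)`,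
and eliminating `P` gives the identity. -/

/-- `p` is the Legendre polynomial of dimension `n` and degree `k`: it is a polynomial
function, normalized by `p 1 = 1`, satisfying the Legendre ODE
`(1-t²)y'' - (n-1)t·y' + k(k+n-2)y = 0`. -/
def IsLegendre (n k : ℕ) (p : ℝ → ℝ) : Prop :=
  (∃ q : Polynomial ℝ, ∀ t, p t = q.eval t) ∧ p 1 = 1 ∧
    ∀ t : ℝ, (1 - t ^ 2) * iteratedDeriv 2 p t - ((n : ℝ) - 1) * t * deriv p t +
      (k : ℝ) * ((k : ℝ) + (n : ℝ) - 2) * p t = 0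

open Polynomial

namespace Polynomial

noncomputable def legendreOp (α μ : ℝ) : ℝ[X] →ₗ[ℝ] ℝ[X] where
  toFun f := (1 - X ^ 2) * derivative (derivative f) - C α * (X * derivative f) + C μ * f
  map_add' f g := by simp only [map_add]; ring
  map_smul' a f := by simp only [smul_eq_C_mul, derivative_C_mul, RingHom.id_apply]; ring

noncomputable def A₁ (f : ℝ[X]) : ℝ[X] := f - X * derivative f

variable {α μ κ : ℝ} {f g h : ℝ[X]}

lemma legendreOp_apply (α μ : ℝ) (f : ℝ[X]) :
    legendreOp α μ f =
      (1 - X ^ 2) * derivative (derivative f) - C α * (X * derivative f) + C μ * f := rfl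

lemma legendreOp_C_mul (α μ a : ℝ) (f : ℝ[X]) :
    legendreOp α μ (C a * f) = C a * legendreOp α μ f := by
  rw [← smul_eq_C_mul, map_smul, smul_eq_C_mul]

lemma derivative_legendreOp (α μ : ℝ) (f : ℝ[X]) :
    derivative (legendreOp α μ f) = legendreOp (α + 2) (μ - α) (derivative f) := by
  simp only [legendreOp_apply, derivative_mul, derivative_C, derivative_X, derivative_one,
    derivative_X_pow, map_add, map_sub, map_ofNat, Nat.cast_ofNat]
  ring

lemma mul_eval_one_derivative (hf : legendreOp α μ f = 0) :
    α * (derivative f).eval 1 = μ * f.eval 1 := by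
  have h1 := congrArg (eval 1) hf
  simp only [legendreOp_apply, eval_add, eval_sub, eval_mul, eval_pow, eval_one, eval_X,
    eval_C, eval_zero] at h1
  linear_combination -h1

/-- At `t = 1` the equation determines `f'(1)` from `f(1)`, and `f'` solves another Legendre
equation, so all derivatives of `f` at `1` are determined by `f(1)`. -/
lemma eq_zero_of_legendreOp_eq_zero (hα : 0 < α) (hf : legendreOp α μ f = 0)
    (hf1 : f.eval 1 = 0) : f = 0 := by
  induction hN : f.natDegree using Nat.strong_induction_on generalizing α μ f with
  | _ N ih =>
  have hd : derivative f = 0 := by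
    by_contra hd
    have hd1 : (derivative f).eval 1 = 0 := by
      have := mul_eval_one_derivative hf
      rw [hf1, mul_zero] at this
      exact (mul_eq_zero.1 this).resolve_left hα.ne'
    refine hd (ih _ (hN ▸ natDegree_derivative_lt (mt derivative_eq_zero.2 hd))
      (α := α + 2) (μ := μ - α) (by linarith) ?_ hd1 rfl)
    rw [← derivative_legendreOp, hf, derivative_zero]
  rw [eq_C_of_natDegree_eq_zero (derivative_eq_zero.1 hd)] at hf1 ⊢
  simpa using hf1

lemma legendreOp_add_two_of_legendreOp_eq_zero (hf : legendreOp α μ f = 0) (ν : ℝ) :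
    legendreOp (α + 2) ν f = C (ν - μ - 2) * f + 2 * A₁ f := by
  rw [legendreOp_apply] at hf ⊢
  simp only [A₁, map_add, map_sub, map_ofNat]
  linear_combination hf

lemma legendreOp_add_two_A₁ (hf : legendreOp α μ f = 0) (ν : ℝ) :
    legendreOp (α + 2) ν (A₁ f) = C (2 * (μ - α)) * f + C (ν - μ + 2 * α) * A₁ f := by
  have hf' := congrArg derivative hf
  rw [derivative_legendreOp, derivative_zero, legendreOp_apply] at hf'
  rw [legendreOp_apply] at hf ⊢
  simp only [A₁, derivative_mul, derivative_X, derivative_one, map_add, map_sub,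
    map_mul, map_ofNat] at hf' ⊢
  linear_combination -hf - X * hf'

lemma eq_C_eval_one_mul_of_legendreOp_eq_zero (hα : 0 < α) (hf : legendreOp α μ f = 0)
    (hg : legendreOp α μ g = 0) (hg1 : g.eval 1 = 1) : f = C (f.eval 1) * g := by
  refine sub_eq_zero.1 (eq_zero_of_legendreOp_eq_zero (μ := μ) hα ?_ ?_)
  · rw [map_sub, legendreOp_C_mul, hf, hg, mul_zero, sub_zero]
  · rw [eval_sub, eval_mul, eval_C, hg1, mul_one, sub_self]

lemma legendreOp_C_sub_one_mul_add_A₁ (hf : legendreOp α (κ * (κ + α - 1)) f = 0) :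
    legendreOp (α + 2) ((κ - 2) * (κ + α - 1)) (C (κ - 1) * f + A₁ f) = 0 := by
  rw [map_add, legendreOp_C_mul, legendreOp_add_two_of_legendreOp_eq_zero hf,
    legendreOp_add_two_A₁ hf]
  simp only [map_sub, map_mul, map_add, map_ofNat, map_one]
  ring

lemma legendreOp_A₁_sub_C_add_mul (hf : legendreOp α (κ * (κ + α - 1)) f = 0) :
    legendreOp (α + 2) (κ * (κ + α + 1)) (A₁ f - C (κ + α) * f) = 0 := by
  rw [map_sub, legendreOp_C_mul, legendreOp_add_two_of_legendreOp_eq_zero hf,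
    legendreOp_add_two_A₁ hf]
  simp only [map_sub, map_mul, map_add, map_ofNat, map_one]
  ring

theorem C_mul_A₁_eq_of_legendreOp (hα : 0 < α + 2) (hf : legendreOp α (κ * (κ + α - 1)) f = 0)
    (hf1 : f.eval 1 = 1) (hg : legendreOp (α + 2) ((κ - 2) * (κ + α - 1)) g = 0)
    (hg1 : g.eval 1 = 1) (hh : legendreOp (α + 2) (κ * (κ + α + 1)) h = 0)
    (hh1 : h.eval 1 = 1) :
    C (α * (2 * κ + α - 1)) * A₁ f = -C ((κ - 1) * (κ + α)) * (C κ * g + C (κ + α - 1) * h) := by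
  set d := (derivative f).eval 1
  have hd : C α * C d = C κ * (C κ + C α - 1) := by
    have := mul_eval_one_derivative hf
    rw [hf1, mul_one] at this
    simpa only [map_mul, map_add, map_sub, map_one] using congrArg C this
  have hfg := eq_C_eval_one_mul_of_legendreOp_eq_zero hα (legendreOp_C_sub_one_mul_add_A₁ hf)
    hg hg1
  have hfh := eq_C_eval_one_mul_of_legendreOp_eq_zero hα (legendreOp_A₁_sub_C_add_mul hf) hh hh1
  have hA : (A₁ f).eval 1 = 1 - d := by rw [A₁, eval_sub, eval_mul, eval_X, hf1, one_mul]
  simp only [eval_add, eval_sub, eval_mul, eval_C, hA, hf1] at hfg hfh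
  simp only [map_sub, map_mul, map_add, map_one, map_ofNat] at hfg hfh ⊢
  linear_combination C α * (C κ + C α) * hfg + C α * (C κ - 1) * hfh
    - ((C κ + C α) * g + (C κ - 1) * h) * hd

end Polynomial

theorem IsLegendre.exists_polynomial {n k : ℕ} {p : ℝ → ℝ} (hp : IsLegendre n k p) :
    ∃ q : ℝ[X], p = (fun t => q.eval t) ∧ q.eval 1 = 1 ∧
      legendreOp ((n : ℝ) - 1) (k * (k + n - 2)) q = 0 := by
  obtain ⟨⟨q, hq⟩, hp1, hode⟩ := hp
  obtain rfl : p = fun t => q.eval t := funext hq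
  refine ⟨q, rfl, hp1, Polynomial.funext fun t => ?_⟩
  have hd : deriv (fun s => q.eval s) = fun s => (derivative q).eval s :=
    funext fun _ => Polynomial.deriv q
  have hd2 : iteratedDeriv 2 (fun s => q.eval s) = fun s => (derivative (derivative q)).eval s := by
    rw [iteratedDeriv_succ, iteratedDeriv_one, hd]
    exact funext fun _ => Polynomial.deriv _
  have ht := hode t
  rw [hd2, hd] at ht
  simp only [legendreOp_apply, eval_add, eval_sub, eval_mul, eval_pow, eval_one, eval_X, eval_C,
    eval_zero]
  linear_combination ht

/-- For `n ≥ 3`, `k ≥ 2`, with `P = Pⁿₖ`, `Q = Pⁿ⁺²ₖ₋₂`, `R = Pⁿ⁺²ₖ`: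
`(n-1)/((k-1)(k+n-1)) · A₁Pⁿₖ = -(k/(2k+n-2))·Pⁿ⁺²ₖ₋₂ - ((k+n-2)/(2k+n-2))·Pⁿ⁺²ₖ`,
where `A₁ψ(t) = ψ(t) - tψ'(t)`. -/
theorem legendre_A1_identity (n k : ℕ) (hn : 3 ≤ n) (hk : 2 ≤ k)
    (P Q R : ℝ → ℝ) (hP : IsLegendre n k P) (hQ : IsLegendre (n + 2) (k - 2) Q)
    (hR : IsLegendre (n + 2) k R) :
    ∀ t : ℝ,
      (((n : ℝ) - 1) / (((k : ℝ) - 1) * ((k : ℝ) + (n : ℝ) - 1))) * (P t - t * deriv P t) =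
        -((k : ℝ) / (2 * (k : ℝ) + (n : ℝ) - 2)) * Q t -
          (((k : ℝ) + (n : ℝ) - 2) / (2 * (k : ℝ) + (n : ℝ) - 2)) * R t := by
  obtain ⟨p, rfl, hp1, hp⟩ := hP.exists_polynomial
  obtain ⟨q, rfl, hq1, hq⟩ := hQ.exists_polynomial
  obtain ⟨r, rfl, hr1, hr⟩ := hR.exists_polynomial
  have hkR : (2 : ℝ) ≤ k := by exact_mod_cast hk
  have hnR : (3 : ℝ) ≤ n := by exact_mod_cast hn
  have key := C_mul_A₁_eq_of_legendreOp (α := n - 1) (κ := k) (by linarith)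
    (by convert hp using 3; ring) hp1
    (by convert hq using 3 <;> push_cast [Nat.cast_sub hk] <;> ring) hq1
    (by convert hr using 3 <;> push_cast <;> ring) hr1
  intro t
  have ht := congrArg (eval t) key
  simp only [A₁, eval_mul, eval_C, eval_neg, eval_add, eval_sub, eval_X] at ht
  rw [Polynomial.deriv]
  field_simp
  rw [div_eq_div_iff (by nlinarith) (by linarith)]
  linear_combination ht
end

section
/- Let n ≥ 3 and k ≥ 2. The minimum over [-1,1] of A₁Pⁿₖ(t) = Pⁿₖ(t) - t·(Pⁿₖ)'(t) equals its value at t = 1, namely -(k-1)(k+n-1)/(n-1). -/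
namespace Polynomial

open Set

theorem eq_zero_of_forall_iterate_derivative_eval_eq_zero {R : Type*} [CommRing R]
    [IsAddTorsionFree R] {p : R[X]} {r : R} (h : ∀ m, (derivative^[m] p).eval r = 0) :
    p = 0 := by
  rw [← taylor_eq_zero (r := r)]
  ext m
  have hm : m.factorial • (hasseDeriv m p).eval r = 0 := by
    rw [← eval_smul, ← LinearMap.smul_apply, factorial_smul_hasseDeriv, h]
  rw [taylor_coeff, coeff_zero]
  exact (nsmul_eq_zero_iff.mp hm).resolve_right m.factorial_ne_zero

def SolvesLegendreODE (b μ : ℝ) (p : ℝ[X]) : Prop :=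
  (1 - X ^ 2) * derivative (derivative p) - C b * (X * derivative p) + C μ * p = 0

variable {b μ : ℝ} {p q : ℝ[X]}

theorem solvesLegendreODE_iff :
    SolvesLegendreODE b μ p ↔ ∀ t : ℝ, (1 - t ^ 2) * iteratedDeriv 2 (fun s ↦ p.eval s) t -
      b * t * deriv (fun s ↦ p.eval s) t + μ * p.eval t = 0 := by
  have hderiv : deriv (fun s ↦ p.eval s) = fun s ↦ p.derivative.eval s :=
    _root_.funext fun _ ↦ Polynomial.deriv p
  simp only [iteratedDeriv_succ, iteratedDeriv_zero, hderiv, Polynomial.deriv]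
  refine ⟨fun h t ↦ by simpa [mul_assoc] using congrArg (eval t) h, fun h ↦ funext fun t ↦ ?_⟩
  simpa [mul_assoc] using h t

namespace SolvesLegendreODE

theorem eval_eq_zero (h : SolvesLegendreODE b μ p) (t : ℝ) :
    (1 - t ^ 2) * p.derivative.derivative.eval t - b * (t * p.derivative.eval t) +
      μ * p.eval t = 0 := by
  simpa using congrArg (eval t) h

theorem derivative_eval_one (h : SolvesLegendreODE b μ p) (hb : b ≠ 0) :
    p.derivative.eval 1 = μ / b * p.eval 1 := by
  have := h.eval_eq_zero 1
  field_simp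
  linarith

theorem C_mul_sub_C_mul (hp : SolvesLegendreODE b μ p) (hq : SolvesLegendreODE b μ q)
    (c d : ℝ) : SolvesLegendreODE b μ (C c * p - C d * q) := by
  unfold SolvesLegendreODE at *
  simp only [derivative_sub, derivative_C_mul]
  linear_combination C c * hp - C d * hq

theorem comp_neg_X (h : SolvesLegendreODE b μ p) : SolvesLegendreODE b μ (p.comp (-X)) := by
  have h' := congrArg (comp · (-X)) h
  unfold SolvesLegendreODE
  simp only [add_comp, sub_comp, mul_comp, one_comp, pow_comp, X_comp, C_comp,
    zero_comp] at h'
  simp only [derivative_comp, derivative_neg, derivative_X, neg_mul, one_mul]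
  linear_combination h'

theorem derivative (h : SolvesLegendreODE b μ p) :
    SolvesLegendreODE (b + 2) (μ - b) p.derivative := by
  have h' := congrArg Polynomial.derivative h
  unfold SolvesLegendreODE
  simp only [derivative_add, derivative_sub, derivative_mul, derivative_C, derivative_one,
    derivative_X_pow, derivative_X, derivative_zero, Nat.cast_ofNat, map_ofNat] at h'
  simp only [map_add, map_sub, C_ofNat]
  linear_combination h'

theorem iterate_derivative_eval_one_eq_zero (h : SolvesLegendreODE b μ p) (hb : 0 < b)
    (h1 : p.eval 1 = 0) (m : ℕ) : (Polynomial.derivative^[m] p).eval 1 = 0 := by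
  induction m generalizing b μ p with
  | zero => exact h1
  | succ m ih =>
    rw [Function.iterate_succ_apply]
    exact ih h.derivative (by linarith) (by rw [h.derivative_eval_one hb.ne', h1, mul_zero])

theorem eq_zero_of_eval_one (h : SolvesLegendreODE b μ p) (hb : 0 < b) (h1 : p.eval 1 = 0) :
    p = 0 :=
  eq_zero_of_forall_iterate_derivative_eval_eq_zero (h.iterate_derivative_eval_one_eq_zero hb h1)

theorem eval_one_mul_eval_neg (h : SolvesLegendreODE b μ p) (hb : 0 < b) (t : ℝ) :
    p.eval 1 * p.eval (-t) = p.eval (-1) * p.eval t := by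
  have h0 := (h.comp_neg_X.C_mul_sub_C_mul h (p.eval 1) (p.eval (-1))).eq_zero_of_eval_one hb
    (by simp [mul_comm])
  simpa [sub_eq_zero] using congrArg (eval t) h0

theorem sq_eval_neg_one (h : SolvesLegendreODE b μ p) (hb : 0 < b) :
    p.eval (-1) ^ 2 = p.eval 1 ^ 2 := by
  have := h.eval_one_mul_eval_neg hb (-1)
  rw [neg_neg] at this
  linear_combination -this

end SolvesLegendreODE

theorem eval_le_max_eval_one_eval_neg_one {f : ℝ[X]} (hf : ∀ x, 0 ≤ x * f.derivative.eval x)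
    {t : ℝ} (ht : t ∈ Icc (-1) 1) : f.eval t ≤ max (f.eval 1) (f.eval (-1)) := by
  rcases le_total 0 t with h0 | h0
  · have hmono : MonotoneOn (fun s ↦ f.eval s) (Icc 0 1) := by
      refine monotoneOn_of_deriv_nonneg (convex_Icc 0 1) f.continuousOn
        f.differentiable.differentiableOn fun x hx ↦ ?_
      rw [interior_Icc] at hx
      rw [Polynomial.deriv]
      exact nonneg_of_mul_nonneg_right (hf x) hx.1
    exact le_max_of_le_left (hmono ⟨h0, ht.2⟩ ⟨zero_le_one, le_rfl⟩ ht.2)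
  · have hanti : AntitoneOn (fun s ↦ f.eval s) (Icc (-1) 0) := by
      refine antitoneOn_of_deriv_nonpos (convex_Icc (-1) 0) f.continuousOn
        f.differentiable.differentiableOn fun x hx ↦ ?_
      rw [interior_Icc] at hx
      rw [Polynomial.deriv]
      exact nonpos_of_mul_nonneg_right (hf x) hx.2
    exact le_max_of_le_right (hanti ⟨le_rfl, by norm_num⟩ ⟨ht.1, h0⟩ ht.1)

noncomputable def legendreEnergy (μ : ℝ) (p : ℝ[X]) : ℝ[X] :=
  C μ * p ^ 2 + (1 - X ^ 2) * derivative p ^ 2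

theorem eval_legendreEnergy (μ : ℝ) (p : ℝ[X]) (t : ℝ) :
    (legendreEnergy μ p).eval t = μ * p.eval t ^ 2 + (1 - t ^ 2) * p.derivative.eval t ^ 2 := by
  simp [legendreEnergy]

namespace SolvesLegendreODE

theorem derivative_legendreEnergy (h : SolvesLegendreODE b μ p) :
    (legendreEnergy μ p).derivative = C (2 * (b - 1)) * (X * p.derivative ^ 2) := by
  unfold legendreEnergy
  unfold SolvesLegendreODE at h
  simp only [derivative_add, derivative_mul, derivative_pow, derivative_C, derivative_X,
    derivative_one, map_sub, map_mul, map_ofNat, map_one, Nat.cast_ofNat]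
  linear_combination (2 * p.derivative) * h

theorem sq_eval_le_max (h : SolvesLegendreODE b μ p) (hb : 1 ≤ b) (hμ : 0 < μ) {t : ℝ}
    (ht : t ∈ Icc (-1) 1) : p.eval t ^ 2 ≤ max (p.eval 1 ^ 2) (p.eval (-1) ^ 2) := by
  have henergy := eval_le_max_eval_one_eval_neg_one (f := legendreEnergy μ p) (fun x ↦ by
    rw [h.derivative_legendreEnergy]
    simp only [eval_mul, eval_C, eval_X, eval_pow]
    nlinarith [mul_nonneg (sub_nonneg.2 hb)
      (mul_nonneg (mul_self_nonneg x) (sq_nonneg (p.derivative.eval x)))]) ht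
  simp only [eval_legendreEnergy, one_pow, neg_one_sq, sub_self, zero_mul, add_zero,
    ← mul_max_of_nonneg _ _ hμ.le] at henergy
  have hweight : 0 ≤ (1 - t ^ 2) * p.derivative.eval t ^ 2 :=
    mul_nonneg (by nlinarith [ht.1, ht.2]) (sq_nonneg _)
  exact le_of_mul_le_mul_left (by linarith) hμ

theorem sq_eval_le_sq_eval_one (h : SolvesLegendreODE b μ p) (hb : 1 ≤ b) (hμ : 0 < μ)
    {t : ℝ} (ht : t ∈ Icc (-1) 1) : p.eval t ^ 2 ≤ p.eval 1 ^ 2 := by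
  simpa [h.sq_eval_neg_one (by linarith)] using h.sq_eval_le_max hb hμ ht

theorem le_eval_sub_X_mul_derivative (h : SolvesLegendreODE b μ p) (hb : 1 ≤ b)
    (hμ : 2 * b ≤ μ) (h1 : p.eval 1 = 1) {t : ℝ} (ht : t ∈ Icc (-1) 1) :
    1 - μ / b ≤ (p - X * p.derivative).eval t := by
  set G := p - X * p.derivative
  have hb0 : 0 < b := by linarith
  have hm : 1 - μ / b ≤ -1 := by
    have : 2 ≤ μ / b := (le_div_iff₀ hb0).2 (by linarith)
    linarith
  have hbound : ∀ s ∈ Icc (-1 : ℝ) 1, -1 ≤ p.eval s ∧ p.eval s ≤ 1 := fun s hs ↦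
    abs_le.1 (sq_le_one_iff_abs_le_one _ |>.1 (by
      simpa [h1] using h.sq_eval_le_sq_eval_one hb (by linarith) hs))
  have hG : ∀ s, G.eval s = p.eval s - s * p.derivative.eval s := by simp [G]
  -- Where the `p''` term of the equation drops out, `G = (1 - μ / b) p`.
  have hcrit : ∀ s ∈ Icc (-1 : ℝ) 1, (1 - s ^ 2) * p.derivative.derivative.eval s = 0 →
      1 - μ / b ≤ G.eval s := by
    intro s hs h0
    have hsp : s * p.derivative.eval s = μ / b * p.eval s := by
      have := h.eval_eq_zero s
      field_simp
      linarith
    rw [hG, hsp]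
    nlinarith [hbound s hs]
  obtain ⟨t₀, ht₀, hmin⟩ :=
    isCompact_Icc.exists_isMinOn (nonempty_Icc.2 (by norm_num : (-1 : ℝ) ≤ 1)) G.continuousOn
  suffices 1 - μ / b ≤ G.eval t₀ from this.trans (hmin ht)
  by_cases hend : t₀ = -1 ∨ t₀ = 1
  · exact hcrit t₀ ht₀ (by rcases hend with rfl | rfl <;> norm_num)
  obtain ⟨hne₁, hne₂⟩ := not_or.1 hend
  have hloc : IsLocalMin (fun s ↦ G.eval s) t₀ := hmin.isLocalMin
    (Icc_mem_nhds (lt_of_le_of_ne ht₀.1 (Ne.symm hne₁)) (lt_of_le_of_ne ht₀.2 hne₂))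
  have hcritical : t₀ * p.derivative.derivative.eval t₀ = 0 := by
    have hG' : G.derivative = -(X * p.derivative.derivative) := by
      simp only [G, derivative_sub, derivative_mul, derivative_X, one_mul]
      ring
    simpa [Polynomial.deriv, hG'] using hloc.deriv_eq_zero
  rcases mul_eq_zero.1 hcritical with rfl | h0
  · rw [hG, zero_mul, sub_zero]
    linarith [hbound 0 (by norm_num)]
  · exact hcrit t₀ ht₀ (by rw [h0, mul_zero])

end SolvesLegendreODE

end Polynomial

/-- For `n ≥ 3` and `k ≥ 2`, the minimum over `[-1,1]` of
`A₁Pⁿₖ(t) = Pⁿₖ(t) - t·(Pⁿₖ)'(t)` is attained at `t = 1`, where its value equals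
`-(k-1)(k+n-1)/(n-1)`. -/
theorem legendre_A1_min (n k : ℕ) (hn : 3 ≤ n) (hk : 2 ≤ k)
    (P : ℝ → ℝ) (hP : IsLegendre n k P) :
    (∀ t ∈ Set.Icc (-1 : ℝ) 1,
        -((((k : ℝ) - 1) * ((k : ℝ) + (n : ℝ) - 1)) / ((n : ℝ) - 1)) ≤ P t - t * deriv P t) ∧
      P 1 - 1 * deriv P 1 = -((((k : ℝ) - 1) * ((k : ℝ) + (n : ℝ) - 1)) / ((n : ℝ) - 1)) := by
  obtain ⟨⟨q, hq⟩, hq1, hODE⟩ := hP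
  obtain rfl : P = fun t ↦ q.eval t := _root_.funext hq
  replace hq1 : q.eval 1 = 1 := hq1
  have hsol : Polynomial.SolvesLegendreODE ((n : ℝ) - 1) (k * (k + n - 2)) q :=
    Polynomial.solvesLegendreODE_iff.2 hODE
  have hn' : (3 : ℝ) ≤ n := by exact_mod_cast hn
  have hk' : (2 : ℝ) ≤ k := by exact_mod_cast hk
  have hn1 : (n : ℝ) - 1 ≠ 0 := by linarith
  have hvalue : -((((k : ℝ) - 1) * (k + n - 1)) / (n - 1)) = 1 - k * (k + n - 2) / (n - 1) := by
    field_simp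
    ring
  simp only [Polynomial.deriv, hvalue]
  refine ⟨fun t ht ↦ ?_, ?_⟩
  · simpa using hsol.le_eval_sub_X_mul_derivative (by linarith) (by nlinarith) hq1 ht
  · rw [hsol.derivative_eval_one (by linarith), hq1]
    ring
end

section
/- For n ≥ 3 and k ≥ 2, the Legendre polynomials satisfy the dimension-recurrence identity (2k+n-2)(n-1)Pⁿₖ(t) = (k+n-2)(k+n-1)Pⁿ⁺²ₖ(t) - (k-1)k·Pⁿ⁺²ₖ₋₂(t) for all t. -/
open Polynomial

def PODE (ν lam : ℝ) (p : ℝ[X]) : Prop :=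
  (1 - X^2) * derivative (derivative p) - C (ν - 1) * (X * derivative p) + C lam * p = 0

lemma coeff_X_mul_derivative (p : ℝ[X]) (j : ℕ) :
    (X * derivative p).coeff j = (j:ℝ) * p.coeff j := by
  cases j with
  | zero => simp
  | succ j => rw [coeff_X_mul, coeff_derivative]; push_cast; ring

lemma coeff_X2_mul (p : ℝ[X]) (j : ℕ) :
    (X^2 * p).coeff (j+2) = p.coeff j := by
  simpa using coeff_X_pow_mul p 2 j

lemma pode_iff (ν lam : ℝ) (p : ℝ[X]) :
    PODE ν lam p ↔ ∀ j : ℕ, ((j:ℝ)+1)*((j:ℝ)+2) * p.coeff (j+2)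
      = ((j:ℝ)*((j:ℝ)+ν-2) - lam) * p.coeff j := by
  have key : ∀ j : ℕ,
      ((1 - X^2) * derivative (derivative p) - C (ν - 1) * (X * derivative p) + C lam * p).coeff j
      = ((j:ℝ)+1)*((j:ℝ)+2) * p.coeff (j+2) - (((j:ℝ)*((j:ℝ)+ν-2) - lam) * p.coeff j) := by
    intro j
    rw [coeff_add, coeff_sub, sub_mul, one_mul, coeff_sub, coeff_C_mul, coeff_C_mul,
      coeff_X_mul_derivative]
    have hdd : (derivative (derivative p)).coeff j = ((j:ℝ)+1)*((j:ℝ)+2) * p.coeff (j+2) := by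
      rw [coeff_derivative, coeff_derivative]; push_cast; ring
    have hx2 : (X^2 * derivative (derivative p)).coeff j = (j:ℝ)*((j:ℝ)-1) * p.coeff j := by
      cases j with
      | zero => simp [coeff_mul]
      | succ j => cases j with
        | zero =>
          have : (X^2 * derivative (derivative p)).coeff 1 = 0 := by
            rw [pow_two, mul_assoc, coeff_X_mul]
            simp
          rw [this]; push_cast; ring
        | succ j =>
          rw [coeff_X2_mul, coeff_derivative, coeff_derivative]; push_cast; ring
    rw [hdd, hx2]
    ring
  constructor
  · intro h j
    have := key j
    rw [h, coeff_zero] at this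
    linarith [this]
  · intro h
    unfold PODE
    ext j
    rw [key j, coeff_zero, h j]; ring

lemma pode_natDegree {ν : ℝ} (hν : 2 < ν) {κ : ℕ} {p : ℝ[X]}
    (h : PODE ν ((κ:ℝ)*((κ:ℝ)+ν-2)) p) (hp : p ≠ 0) : p.natDegree = κ := by
  set m := p.natDegree with hm
  have hc := (pode_iff _ _ _).1 h m
  have h2 : p.coeff (m+2) = 0 := coeff_eq_zero_of_natDegree_lt (by omega)
  have hlead : p.coeff m ≠ 0 := by
    rw [hm]; exact mt leadingCoeff_eq_zero.1 hp
  rw [h2, mul_zero] at hc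
  have h0 : (m:ℝ)*((m:ℝ)+ν-2) - (κ:ℝ)*((κ:ℝ)+ν-2) = 0 := by
    rcases mul_eq_zero.1 hc.symm with h | h
    · linarith
    · exact absurd h hlead
  have h1 : ((m:ℝ) - κ) * ((m:ℝ)+(κ:ℝ)+ν-2) = 0 := by linear_combination h0
  rcases mul_eq_zero.1 h1 with h | h
  · have : (m:ℝ) = κ := by linarith
    exact_mod_cast this
  · have : (0:ℝ) ≤ m := Nat.cast_nonneg m
    have : (0:ℝ) ≤ κ := Nat.cast_nonneg κ
    linarith

lemma pode_eval_one {ν : ℝ} {lam : ℝ} {p : ℝ[X]} (h : PODE ν lam p) :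
    (ν - 1) * (derivative p).eval 1 = lam * p.eval 1 := by
  have := congrArg (eval 1) h
  simp only [eval_add, eval_sub, eval_mul, eval_one, eval_pow, eval_X, eval_C,
    eval_zero] at this
  nlinarith [this]

lemma pode_deriv {ν : ℝ} {κ : ℕ} {p : ℝ[X]}
    (h : PODE ν (((κ:ℝ)+1)*(((κ:ℝ)+1)+ν-2)) p) :
    PODE (ν+2) ((κ:ℝ)*((κ:ℝ)+(ν+2)-2)) (derivative p) := by
  rw [pode_iff]
  intro j
  have hp := (pode_iff _ _ _).1 h (j+1)
  have hidx : j+1+2 = j+2+1 := by omega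
  rw [hidx] at hp
  rw [coeff_derivative, coeff_derivative]
  push_cast at hp ⊢
  linear_combination ((j:ℝ)+1) * hp

lemma pode_zero_of_le {κ : ℕ} : ∀ (ν : ℝ), 1 < ν → ∀ p : ℝ[X],
    PODE ν ((κ:ℝ)*((κ:ℝ)+ν-2)) p → p.natDegree ≤ κ → p.eval 1 = 0 → p = 0 := by
  induction κ with
  | zero =>
    intro ν hν p h hd he
    have := eq_C_of_natDegree_le_zero hd
    rw [this] at he ⊢
    simp at he
    rw [he]; simp
  | succ κ ih =>
    intro ν hν p h hd he
    have hκ : (((κ:ℕ):ℝ)+1) = ((κ+1 : ℕ):ℝ) := by push_cast; ring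
    have h' : PODE ν (((κ:ℝ)+1)*(((κ:ℝ)+1)+ν-2)) p := by rw [hκ]; exact h
    have hu : PODE (ν+2) ((κ:ℝ)*((κ:ℝ)+(ν+2)-2)) (derivative p) := pode_deriv h'
    have hue : (derivative p).eval 1 = 0 := by
      have := pode_eval_one h
      rw [he, mul_zero] at this
      have hne : ν - 1 ≠ 0 := by intro h0; rw [sub_eq_zero] at h0; linarith [h0]
      exact (mul_eq_zero.1 this).resolve_left hne
    have hud : (derivative p).natDegree ≤ κ := by
      have := natDegree_derivative_le p
      omega
    have hu0 : derivative p = 0 := ih (ν+2) (by linarith) _ hu hud hue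
    have : p.natDegree = 0 := natDegree_eq_zero_of_derivative_eq_zero hu0
    have hp := eq_C_of_natDegree_le_zero this.le
    rw [hp] at he ⊢
    simp at he
    rw [he]; simp

lemma pode_zero {ν : ℝ} (hν : 2 < ν) {κ : ℕ} {p : ℝ[X]}
    (h : PODE ν ((κ:ℝ)*((κ:ℝ)+ν-2)) p) (he : p.eval 1 = 0) : p = 0 := by
  by_cases hp : p = 0
  · exact hp
  · exact pode_zero_of_le ν (by linarith) p h (pode_natDegree hν h hp).le he

lemma isLegendre_poly {N K : ℕ} {F : ℝ → ℝ} (h : IsLegendre N K F) :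
    ∃ p : ℝ[X], (∀ t, F t = p.eval t) ∧ p.eval 1 = 1 ∧
      PODE (N:ℝ) ((K:ℝ)*((K:ℝ)+(N:ℝ)-2)) p := by
  obtain ⟨⟨p, hp⟩, h1, hode⟩ := h
  have hF : F = fun t => p.eval t := funext hp
  refine ⟨p, hp, by rw [← hp 1]; exact h1, ?_⟩
  have hder : deriv F = fun t => (derivative p).eval t := by
    funext t; rw [hF]; exact Polynomial.deriv p
  have hdd : ∀ t, iteratedDeriv 2 F t = (derivative (derivative p)).eval t := by
    intro t
    rw [show (2:ℕ) = 1+1 from rfl, iteratedDeriv_succ, iteratedDeriv_one, hder]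
    exact Polynomial.deriv (derivative p)
  apply Polynomial.funext
  intro t
  have := hode t
  rw [hdd t, hF] at this
  have hd' : deriv F t = (derivative p).eval t := by rw [hder]
  rw [hF] at hd'
  simp only [eval_add, eval_sub, eval_mul, eval_one, eval_pow, eval_X, eval_C, eval_zero]
  simp only at this
  rw [hd'] at this
  linarith [this]

/-- Dimension recurrence for Legendre polynomials: for `n ≥ 3`, `k ≥ 2`,
`(2k+n-2)(n-1)Pⁿₖ(t) = (k+n-2)(k+n-1)Pⁿ⁺²ₖ(t) - (k-1)k·Pⁿ⁺²ₖ₋₂(t)` for all `t`. -/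
theorem legendre_dimension_recurrence (n k : ℕ) (hn : 3 ≤ n) (hk : 2 ≤ k)
    (P Q R : ℝ → ℝ) (hP : IsLegendre n k P) (hQ : IsLegendre (n + 2) (k - 2) Q)
    (hR : IsLegendre (n + 2) k R) :
    ∀ t : ℝ,
      (2 * (k : ℝ) + (n : ℝ) - 2) * ((n : ℝ) - 1) * P t =
        ((k : ℝ) + (n : ℝ) - 2) * ((k : ℝ) + (n : ℝ) - 1) * R t -
          ((k : ℝ) - 1) * (k : ℝ) * Q t := by
  obtain ⟨l, rfl⟩ : ∃ l, k = l + 2 := ⟨k - 2, by omega⟩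
  obtain ⟨m, rfl⟩ : ∃ m, n = m + 3 := ⟨n - 3, by omega⟩
  simp only [Nat.add_sub_cancel] at hQ
  obtain ⟨p, hpe, hp1, hp⟩ := isLegendre_poly hP
  obtain ⟨q, hqe, hq1, hq⟩ := isLegendre_poly hQ
  obtain ⟨r, hre, hr1, hr⟩ := isLegendre_poly hR
  -- coefficient recurrences
  have hpc : ∀ j : ℕ, ((j:ℝ)+1)*((j:ℝ)+2) * p.coeff (j+2)
      = ((j:ℝ)*((j:ℝ)+((m:ℝ)+3)-2) - ((l:ℝ)+2)*(((l:ℝ)+2)+((m:ℝ)+3)-2)) * p.coeff j := by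
    have := (pode_iff _ _ _).1 hp
    intro j; have h := this j; push_cast at h ⊢; linarith [h]
  have hqc : ∀ j : ℕ, ((j:ℝ)+1)*((j:ℝ)+2) * q.coeff (j+2)
      = ((j:ℝ)*((j:ℝ)+((m:ℝ)+5)-2) - (l:ℝ)*((l:ℝ)+((m:ℝ)+5)-2)) * q.coeff j := by
    have := (pode_iff _ _ _).1 hq
    intro j; have h := this j; push_cast at h ⊢; linarith [h]
  have hrc : ∀ j : ℕ, ((j:ℝ)+1)*((j:ℝ)+2) * r.coeff (j+2)
      = ((j:ℝ)*((j:ℝ)+((m:ℝ)+5)-2) - ((l:ℝ)+2)*(((l:ℝ)+2)+((m:ℝ)+5)-2)) * r.coeff j := by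
    have := (pode_iff _ _ _).1 hr
    intro j; have h := this j; push_cast at h ⊢; linarith [h]
  set a : ℝ := ((l:ℝ)+(m:ℝ)+3)*((l:ℝ)+(m:ℝ)+4) with ha
  set b : ℝ := ((l:ℝ)+1)*((l:ℝ)+2) with hb
  set w : ℝ[X] := C a * (X * derivative r - C ((l:ℝ)+2) * r)
      - C b * (X * derivative q + C ((l:ℝ)+(m:ℝ)+3) * q) with hwdef
  have coeff_w : ∀ j : ℕ, w.coeff j
      = a*((j:ℝ)-((l:ℝ)+2))*(r.coeff j) - b*((j:ℝ)+(l:ℝ)+(m:ℝ)+3)*(q.coeff j) := by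
    intro j
    rw [hwdef]
    simp only [coeff_sub, coeff_add, coeff_C_mul, coeff_X_mul_derivative]
    ring
  have ode_w : PODE ((m:ℝ)+7) ((l:ℝ)*((l:ℝ)+((m:ℝ)+7)-2)) w := by
    rw [pode_iff]
    intro j
    rw [coeff_w j, coeff_w (j+2)]
    have h1 := hrc j
    have h2 := hqc j
    push_cast
    linear_combination (a*((j:ℝ)-(l:ℝ))) * h1 - (b*((j:ℝ)+(l:ℝ)+(m:ℝ)+5)) * h2
  have eval1_w : w.eval 1 = 0 := by
    have e1 := pode_eval_one hr
    have e2 := pode_eval_one hq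
    rw [hr1] at e1
    rw [hq1] at e2
    push_cast at e1 e2
    have hev : w.eval 1 = a*(1*(derivative r).eval 1 - ((l:ℝ)+2)*1)
        - b*(1*(derivative q).eval 1 + ((l:ℝ)+(m:ℝ)+3)*1) := by
      rw [hwdef]
      simp [hr1, hq1]
    rw [hev]
    have key : ((m:ℝ)+4) * (a*(1*(derivative r).eval 1 - ((l:ℝ)+2)*1)
        - b*(1*(derivative q).eval 1 + ((l:ℝ)+(m:ℝ)+3)*1)) = 0 := by
      linear_combination a * e1 - b * e2
    have hm4 : ((m:ℝ)+4) ≠ 0 := by positivity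
    exact (mul_eq_zero.1 key).resolve_left hm4
  have hw0 : w = 0 := pode_zero (by have := Nat.cast_nonneg (α := ℝ) m; linarith) ode_w eval1_w
  have hwc : ∀ j : ℕ,
      a*((j:ℝ)-((l:ℝ)+2))*(r.coeff j) - b*((j:ℝ)+(l:ℝ)+(m:ℝ)+3)*(q.coeff j) = 0 := by
    intro j; rw [← coeff_w j, hw0, coeff_zero]
  set c : ℝ := (2*((l:ℝ)+2)+((m:ℝ)+3)-2)*(((m:ℝ)+3)-1) with hc
  set d : ℝ[X] := C c * p - (C a * r - C b * q) with hddef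
  have ode_d : PODE ((m:ℝ)+3) (((l+2:ℕ):ℝ)*(((l+2:ℕ):ℝ)+((m:ℝ)+3)-2)) d := by
    rw [pode_iff]
    intro j
    have hdc : ∀ i : ℕ, d.coeff i = c * p.coeff i - a * r.coeff i + b * q.coeff i := by
      intro i; rw [hddef]; simp only [coeff_sub, coeff_C_mul]; ring
    rw [hdc j, hdc (j+2)]
    have h0 := hpc j
    have h1 := hrc j
    have h2 := hqc j
    have h3 := hwc j
    push_cast
    linear_combination c * h0 - a * h1 + b * h2 - 2 * h3
  have eval1_d : d.eval 1 = 0 := by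
    rw [hddef]
    simp [hp1, hq1, hr1, ha, hb, hc]
    ring
  have hd0 : d = 0 := pode_zero (by have := Nat.cast_nonneg (α := ℝ) m; linarith) ode_d eval1_d
  intro t
  have hev : d.eval t = 0 := by rw [hd0, eval_zero]
  rw [hddef] at hev
  simp only [eval_sub, eval_mul, eval_C] at hev
  rw [hpe t, hqe t, hre t]
  push_cast
  linear_combination hev
end

section
/- Let n ≥ 3, α ≥ 0, and let μ be a finite signed zonal Borel measure on S^{n-1} supported in the closed upper hemisphere {u : ⟨ē,u⟩ ≥ 0}, such that |μ|({u : ⟨ē,u⟩ > cos r}) ≤ C·r^α for all r ≥ 0 and some C > 0. If α < (n-2)/2 then the Fourier–Legendre coefficients aⁿₖ[μ] = ∫_{S^{n-1}} Pⁿₖ(⟨ē,u⟩) μ(du) satisfy aⁿₖ[μ] = O(k^{-α}) as k → ∞. -/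
/-
Write `m = (n - 2) / 2` and `⟨ē, u⟩ = cos θ`; the coefficient is at most `∫ |Pⁿₖ(cos θ)| d|μ|`.
On the upper hemisphere, `|Pⁿₖ| ≤ 1` and the Szegő-type bound `θ ^ m |Pⁿₖ(cos θ)| ≤ (A / k) ^ m`
both follow from monotone energy functionals of the Legendre equation (Sonine's method), so no
asymptotics of `Pⁿₖ` are needed. Hence `|Pⁿₖ| ≥ s` forces `θ < 2 (A / k) s ^ (-1/m)`, and the
cap hypothesis gives the tail bound `|μ| {|Pⁿₖ| ≥ s} ≤ C' k ^ (-α) s ^ (-α/m)`. As `α / m < 1`,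
the layer-cake formula integrates this tail over `s ∈ (0, 1]` to `O(k ^ (-α))`.
-/

open MeasureTheory

open Set Real

theorem monotoneOn_Icc_of_hasDerivAt_nonneg {f f' : ℝ → ℝ} {a b : ℝ}
    (hf : ∀ x ∈ Icc a b, HasDerivAt f (f' x) x) (hf' : ∀ x ∈ Ioo a b, 0 ≤ f' x) :
    MonotoneOn f (Icc a b) := by
  refine monotoneOn_of_hasDerivWithinAt_nonneg (f' := f') (convex_Icc a b)
    (fun x hx => (hf x hx).continuousAt.continuousWithinAt) (fun x hx => ?_) (fun x hx => ?_)
  · rw [interior_Icc] at hx ⊢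
    exact (hf x (Ioo_subset_Icc_self hx)).hasDerivWithinAt
  · rw [interior_Icc] at hx
    exact hf' x hx

/-
Sonine's method for the Gegenbauer-type equation `(1 - t²) p'' = (2m + 1) t p' - (K² - m²) p`,
which is the Legendre equation of dimension `2m + 2` and degree `K - m`. In the angle variable
`t = cos θ`, `v(θ) = sin θ ^ m · p (cos θ)` solves `v'' + Q v = 0` with
`Q = K² - m (m - 1) / sin² θ`, and `v' = sin θ ^ (m - 1) · w` where `w = m t p - (1 - t²) p'`.
The functionals `v² + v'² / Q` and `Q v² + v'²` are, in the variable `t`,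
`(1 - t²) ^ m (p² + w² / D)` and `(1 - t²) ^ (m - 1) (D p² + w²)`, where
`D = K² (1 - t²) - m (m - 1)`. On `[0, 1)` the first increases when `m ≥ 1` (where `D > 0`),
the second when `m ≤ 1`.
-/
section Sonine

variable {m K t : ℝ} {p p' p'' : ℝ → ℝ}

theorem hasDerivAt_sonine_w (hp : HasDerivAt p (p' t) t) (hp' : HasDerivAt p' (p'' t) t)
    (hode : (1 - t ^ 2) * p'' t = (2 * m + 1) * t * p' t - (K ^ 2 - m ^ 2) * p t) :
    HasDerivAt (fun t => m * t * p t - (1 - t ^ 2) * p' t)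
      ((K ^ 2 - m * (m - 1)) * p t - (m - 1) * t * p' t) t := by
  have h := (((hasDerivAt_id t).const_mul m).mul hp).sub
    (((hasDerivAt_pow 2 t).const_sub 1).mul hp')
  refine h.congr_deriv ?_
  simp only [id_eq]
  linear_combination -hode

theorem hasDerivAt_one_sub_sq_rpow (ht : t ^ 2 < 1) (a : ℝ) :
    HasDerivAt (fun t : ℝ => (1 - t ^ 2) ^ a) (-2 * a * t * (1 - t ^ 2) ^ (a - 1)) t := by
  convert ((hasDerivAt_pow 2 t).const_sub 1).rpow_const (p := a) (Or.inl (by linarith)) using 1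
  push_cast; ring

theorem hasDerivAt_sonine₁ (hp : HasDerivAt p (p' t) t) (hp' : HasDerivAt p' (p'' t) t)
    (hode : (1 - t ^ 2) * p'' t = (2 * m + 1) * t * p' t - (K ^ 2 - m ^ 2) * p t)
    (ht : t ^ 2 < 1) (hD : 0 < K ^ 2 * (1 - t ^ 2) - m * (m - 1)) :
    HasDerivAt (fun t => (1 - t ^ 2) ^ m * (p t ^ 2 + (m * t * p t - (1 - t ^ 2) * p' t) ^ 2
        / (K ^ 2 * (1 - t ^ 2) - m * (m - 1))))
      (2 * t * m * (m - 1) * (1 - t ^ 2) ^ (m - 1) * (m * t * p t - (1 - t ^ 2) * p' t) ^ 2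
        / (K ^ 2 * (1 - t ^ 2) - m * (m - 1)) ^ 2) t := by
  have hw := hasDerivAt_sonine_w hp hp' hode
  have hD' := (((hasDerivAt_pow 2 t).const_sub 1).const_mul (K ^ 2)).sub_const (m * (m - 1))
  refine ((hasDerivAt_one_sub_sq_rpow ht m).mul
    ((hp.pow 2).add ((hw.pow 2).div hD' hD.ne'))).congr_deriv ?_
  have hS : (1 - t ^ 2) ^ m = (1 - t ^ 2) ^ (m - 1) * (1 - t ^ 2) := by
    rw [← rpow_add_one (by linarith) (m - 1), sub_add_cancel]
  rw [hS]
  simp only [Pi.add_apply, Pi.pow_apply, Pi.div_apply]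
  have hD0 := hD.ne'
  norm_num
  generalize hDdef : K ^ 2 * (1 - t ^ 2) - m * (m - 1) = D at *
  field_simp
  rw [← hDdef]
  ring

theorem hasDerivAt_sonine₂ (hp : HasDerivAt p (p' t) t) (hp' : HasDerivAt p' (p'' t) t)
    (hode : (1 - t ^ 2) * p'' t = (2 * m + 1) * t * p' t - (K ^ 2 - m ^ 2) * p t)
    (ht : t ^ 2 < 1) :
    HasDerivAt (fun t => (1 - t ^ 2) ^ (m - 1) * ((K ^ 2 * (1 - t ^ 2) - m * (m - 1)) * p t ^ 2
        + (m * t * p t - (1 - t ^ 2) * p' t) ^ 2))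
      (-2 * t * m * (m - 1) * (1 - t ^ 2) ^ (m - 2) * p t ^ 2) t := by
  have hw := hasDerivAt_sonine_w hp hp' hode
  have hD' := (((hasDerivAt_pow 2 t).const_sub 1).const_mul (K ^ 2)).sub_const (m * (m - 1))
  refine ((hasDerivAt_one_sub_sq_rpow ht (m - 1)).mul
    ((hD'.mul (hp.pow 2)).add (hw.pow 2))).congr_deriv ?_
  have hS : (1 - t ^ 2) ^ (m - 1) = (1 - t ^ 2) ^ (m - 2) * (1 - t ^ 2) := by
    rw [← rpow_add_one (by linarith) (m - 2)]; ring_nf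
  rw [hS, show m - 1 - 1 = m - 2 by ring]
  simp only [Pi.add_apply, Pi.mul_apply, Pi.pow_apply]
  push_cast
  ring

theorem sonine_w_sq_le {c : ℝ} (hc0 : 0 ≤ c) (hc1 : c ≤ 1) (hpc : p c ^ 2 ≤ 1)
    (hp'c : (1 - c ^ 2) * p' c ^ 2 ≤ K ^ 2) :
    (m * c * p c - (1 - c ^ 2) * p' c) ^ 2 ≤ 2 * m ^ 2 + 2 * (1 - c ^ 2) * K ^ 2 := by
  have hs : 0 ≤ 1 - c ^ 2 := by nlinarith
  have h1 : (m * c * p c) ^ 2 ≤ m ^ 2 := by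
    have : c ^ 2 * p c ^ 2 ≤ 1 := mul_le_one₀ (by nlinarith) (sq_nonneg _) hpc
    nlinarith [sq_nonneg m]
  have h2 : ((1 - c ^ 2) * p' c) ^ 2 ≤ (1 - c ^ 2) * K ^ 2 := by
    nlinarith [mul_le_mul_of_nonneg_left hp'c hs]
  nlinarith [sq_nonneg (m * c * p c + (1 - c ^ 2) * p' c)]

theorem one_sub_sq_rpow_mul_sq_le_of_ode_of_one_le (hp : ∀ t, HasDerivAt p (p' t) t)
    (hp' : ∀ t, HasDerivAt p' (p'' t) t)
    (hode : ∀ t, (1 - t ^ 2) * p'' t = (2 * m + 1) * t * p' t - (K ^ 2 - m ^ 2) * p t)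
    (hm : 1 ≤ m) {c : ℝ} (hc0 : 0 ≤ c) (hc1 : c < 1) (hK : 4 * m ^ 2 ≤ K ^ 2 * (1 - c ^ 2))
    (hpc : p c ^ 2 ≤ 1) (hp'c : (1 - c ^ 2) * p' c ^ 2 ≤ K ^ 2) (ht : t ∈ Icc 0 c) :
    (1 - t ^ 2) ^ m * p t ^ 2 ≤ 5 * (1 - c ^ 2) ^ m := by
  set D : ℝ → ℝ := fun x => K ^ 2 * (1 - x ^ 2) - m * (m - 1)
  set w : ℝ → ℝ := fun x => m * x * p x - (1 - x ^ 2) * p' x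
  have hx1 : ∀ x ∈ Icc 0 c, x ^ 2 < 1 := fun x hx => by nlinarith [hx.1, hx.2]
  have hD : ∀ x ∈ Icc 0 c, 3 / 4 * (K ^ 2 * (1 - c ^ 2)) ≤ D x := fun x hx => by
    have : K ^ 2 * (1 - c ^ 2) ≤ K ^ 2 * (1 - x ^ 2) :=
      mul_le_mul_of_nonneg_left (by nlinarith [hx.1, hx.2]) (sq_nonneg K)
    simp only [D]; nlinarith
  have hDpos : ∀ x ∈ Icc 0 c, 0 < D x := fun x hx => by nlinarith [hD x hx]
  have hmono : MonotoneOn (fun x => (1 - x ^ 2) ^ m * (p x ^ 2 + w x ^ 2 / D x)) (Icc 0 c) := by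
    refine monotoneOn_Icc_of_hasDerivAt_nonneg (fun x hx =>
      hasDerivAt_sonine₁ (hp x) (hp' x) (hode x) (hx1 x hx) (hDpos x hx)) fun x hx => ?_
    have := rpow_nonneg (show 0 ≤ 1 - x ^ 2 by nlinarith [hx1 x (Ioo_subset_Icc_self hx)])
      (m - 1)
    have : 0 ≤ 2 * x * m * (m - 1) := by
      have := hx.1
      exact mul_nonneg (by positivity) (by linarith)
    positivity
  have hc : c ∈ Icc 0 c := ⟨hc0, le_rfl⟩
  have hupper : p c ^ 2 + w c ^ 2 / D c ≤ 5 := by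
    have hw := sonine_w_sq_le hc0 hc1.le hpc hp'c (m := m)
    have : w c ^ 2 / D c ≤ 4 := by
      rw [div_le_iff₀ (hDpos c hc)]; nlinarith [hD c hc]
    linarith
  calc (1 - t ^ 2) ^ m * p t ^ 2
      ≤ (1 - t ^ 2) ^ m * (p t ^ 2 + w t ^ 2 / D t) := by
        have := hDpos t ht
        gcongr
        · exact rpow_nonneg (by nlinarith [hx1 t ht]) m
        · exact le_add_of_nonneg_right (by positivity)
    _ ≤ (1 - c ^ 2) ^ m * (p c ^ 2 + w c ^ 2 / D c) := hmono ht hc ht.2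
    _ ≤ 5 * (1 - c ^ 2) ^ m := by
        rw [mul_comm]
        exact mul_le_mul_of_nonneg_right hupper (rpow_nonneg (by nlinarith) m)

theorem one_sub_sq_rpow_mul_sq_le_of_ode_of_le_one (hp : ∀ t, HasDerivAt p (p' t) t)
    (hp' : ∀ t, HasDerivAt p' (p'' t) t)
    (hode : ∀ t, (1 - t ^ 2) * p'' t = (2 * m + 1) * t * p' t - (K ^ 2 - m ^ 2) * p t)
    (hm : 1 / 2 ≤ m) (hm1 : m ≤ 1) {c : ℝ} (hc0 : 0 ≤ c) (hc1 : c < 1)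
    (hK : 4 * m ^ 2 ≤ K ^ 2 * (1 - c ^ 2))
    (hpc : p c ^ 2 ≤ 1) (hp'c : (1 - c ^ 2) * p' c ^ 2 ≤ K ^ 2) (ht : t ∈ Icc 0 c) :
    (1 - t ^ 2) ^ m * p t ^ 2 ≤ 5 * (1 - c ^ 2) ^ m := by
  set D : ℝ → ℝ := fun x => K ^ 2 * (1 - x ^ 2) - m * (m - 1)
  set w : ℝ → ℝ := fun x => m * x * p x - (1 - x ^ 2) * p' x
  have hx1 : ∀ x ∈ Icc 0 c, 0 < 1 - x ^ 2 := fun x hx => by nlinarith [hx.1, hx.2]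
  have hmm : 0 ≤ -(m * (m - 1)) := by nlinarith
  have hmono : MonotoneOn (fun x => (1 - x ^ 2) ^ (m - 1) * (D x * p x ^ 2 + w x ^ 2))
      (Icc 0 c) := by
    refine monotoneOn_Icc_of_hasDerivAt_nonneg (fun x hx =>
      hasDerivAt_sonine₂ (hp x) (hp' x) (hode x) (by linarith [hx1 x hx])) fun x hx => ?_
    have := rpow_nonneg (hx1 x (Ioo_subset_Icc_self hx)).le (m - 2)
    have : 0 ≤ -2 * x * m * (m - 1) := by nlinarith [hx.1]
    positivity
  have hc : c ∈ Icc 0 c := ⟨hc0, le_rfl⟩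
  have hs := hx1 c hc
  have hKpos : 0 < K ^ 2 := by nlinarith
  have hsplit : ∀ x ∈ Icc 0 c, (1 - x ^ 2) ^ m = (1 - x ^ 2) ^ (m - 1) * (1 - x ^ 2) :=
    fun x hx => by rw [← rpow_add_one (hx1 x hx).ne' (m - 1), sub_add_cancel]
  have hlower : K ^ 2 * ((1 - t ^ 2) ^ m * p t ^ 2)
      ≤ (1 - t ^ 2) ^ (m - 1) * (D t * p t ^ 2 + w t ^ 2) := by
    have := rpow_nonneg (hx1 t ht).le (m - 1)
    rw [hsplit t ht]
    have : K ^ 2 * (1 - t ^ 2) * p t ^ 2 ≤ D t * p t ^ 2 + w t ^ 2 := by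
      simp only [D]; nlinarith [sq_nonneg (p t), sq_nonneg (w t), mul_nonneg hmm (sq_nonneg (p t))]
    nlinarith [mul_le_mul_of_nonneg_left this ‹_›]
  have hupper : (1 - c ^ 2) ^ (m - 1) * (D c * p c ^ 2 + w c ^ 2)
      ≤ K ^ 2 * (5 * (1 - c ^ 2) ^ m) := by
    have hw := sonine_w_sq_le hc0 hc1.le hpc hp'c (m := m)
    have hDc : D c * p c ^ 2 ≤ K ^ 2 * (1 - c ^ 2) + m ^ 2 := by
      simp only [D]; nlinarith [mul_le_mul_of_nonneg_left hpc (by nlinarith : 0 ≤ D c)]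
    have := rpow_nonneg hs.le (m - 1)
    rw [hsplit c hc]
    nlinarith [mul_le_mul_of_nonneg_left (add_le_add hDc hw) this]
  have := hlower.trans ((hmono ht hc ht.2).trans hupper)
  exact le_of_mul_le_mul_left this hKpos

theorem one_sub_sq_rpow_mul_sq_le_of_ode (hp : ∀ t, HasDerivAt p (p' t) t)
    (hp' : ∀ t, HasDerivAt p' (p'' t) t)
    (hode : ∀ t, (1 - t ^ 2) * p'' t = (2 * m + 1) * t * p' t - (K ^ 2 - m ^ 2) * p t)
    (hm : 1 / 2 ≤ m) {c : ℝ} (hc0 : 0 ≤ c) (hc1 : c < 1) (hK : 4 * m ^ 2 ≤ K ^ 2 * (1 - c ^ 2))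
    (hpc : p c ^ 2 ≤ 1) (hp'c : (1 - c ^ 2) * p' c ^ 2 ≤ K ^ 2) (ht : t ∈ Icc 0 c) :
    (1 - t ^ 2) ^ m * p t ^ 2 ≤ 5 * (1 - c ^ 2) ^ m := by
  rcases le_total m 1 with hm1 | hm1
  · exact one_sub_sq_rpow_mul_sq_le_of_ode_of_le_one hp hp' hode hm hm1 hc0 hc1 hK hpc hp'c ht
  · exact one_sub_sq_rpow_mul_sq_le_of_ode_of_one_le hp hp' hode hm1 hc0 hc1 hK hpc hp'c ht

end Sonine

namespace IsLegendre

variable {n k : ℕ} {p : ℝ → ℝ}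

theorem hasDerivAt (hp : IsLegendre n k p) (t : ℝ) : HasDerivAt p (deriv p t) t := by
  obtain ⟨q, hq⟩ := hp.1
  rw [funext hq]
  exact (q.differentiable t).hasDerivAt

theorem hasDerivAt_deriv (hp : IsLegendre n k p) (t : ℝ) :
    HasDerivAt (deriv p) (deriv (deriv p) t) t := by
  obtain ⟨q, hq⟩ := hp.1
  rw [funext hq, funext fun x => q.deriv (x := x)]
  exact (q.derivative.differentiable t).hasDerivAt

theorem continuous (hp : IsLegendre n k p) : Continuous p := by
  obtain ⟨q, hq⟩ := hp.1
  rw [funext hq]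
  exact q.continuous

theorem ode (hp : IsLegendre n k p) (t : ℝ) :
    (1 - t ^ 2) * deriv (deriv p) t = ((n : ℝ) - 1) * t * deriv p t - k * (k + n - 2) * p t := by
  have h := hp.2.2 t
  rw [iteratedDeriv_succ, iteratedDeriv_one] at h
  linarith

theorem energy_le (hp : IsLegendre n k p) (hn : 2 ≤ n) {t : ℝ} (ht : t ∈ Icc (0 : ℝ) 1) :
    k * (k + n - 2) * p t ^ 2 + (1 - t ^ 2) * deriv p t ^ 2 ≤ k * (k + n - 2) := by
  have hmono : MonotoneOn (fun x => k * (k + n - 2) * p x ^ 2 + (1 - x ^ 2) * deriv p x ^ 2)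
      (Icc 0 1) := by
    refine monotoneOn_Icc_of_hasDerivAt_nonneg (fun x _ =>
      (((hp.hasDerivAt x).pow 2).const_mul _).add
        (((hasDerivAt_pow 2 x).const_sub 1).mul ((hp.hasDerivAt_deriv x).pow 2))) ?_
    intro x hx
    have : 0 ≤ (n : ℝ) - 2 := by linarith [show (2 : ℝ) ≤ n by exact_mod_cast hn]
    have : 0 ≤ 2 * ((n : ℝ) - 2) * x * deriv p x ^ 2 := by
      have := hx.1
      positivity
    convert this using 1
    push_cast
    linear_combination (2 * deriv p x) * hp.ode x
  simpa [hp.2.1] using hmono ht ⟨zero_le_one, le_rfl⟩ ht.2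

theorem sq_le_one (hp : IsLegendre n k p) (hn : 2 ≤ n) (hk : 1 ≤ k) {t : ℝ}
    (ht : t ∈ Icc (0 : ℝ) 1) : p t ^ 2 ≤ 1 := by
  have h := hp.energy_le hn ht
  have : (1 : ℝ) ≤ k * (k + n - 2) := by
    have : (1 : ℝ) ≤ k := by exact_mod_cast hk
    have : (2 : ℝ) ≤ n := by exact_mod_cast hn
    nlinarith
  have : 0 ≤ (1 - t ^ 2) * deriv p t ^ 2 := mul_nonneg (by nlinarith [ht.1, ht.2]) (sq_nonneg _)
  nlinarith

theorem one_sub_sq_rpow_mul_sq_le (hp : IsLegendre n k p) {m : ℝ} (hnm : (n : ℝ) = 2 * m + 2)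
    (hm : 1 / 2 ≤ m) (hk : 1 ≤ k) (hr : π * m / k < π / 2) {t : ℝ} (ht0 : 0 ≤ t)
    (ht : t ≤ cos (π * m / k)) :
    (1 - t ^ 2) ^ m * p t ^ 2 ≤ 5 * ((π * m / k) ^ 2) ^ m := by
  set r := π * m / k
  have hn : 2 ≤ n := by exact_mod_cast (show (2 : ℝ) ≤ n by linarith)
  have hr0 : 0 < r := by positivity
  have hsin0 : 0 < sin r := sin_pos_of_pos_of_lt_pi hr0 (by linarith)
  have hsin : 2 * m ≤ k * sin r := by
    have := mul_le_sin hr0.le hr.le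
    rw [show 2 / π * r = 2 * m / k by simp only [r]; field_simp, div_le_iff₀' (by positivity)]
      at this
    exact this
  have hsc : 1 - cos r ^ 2 = sin r ^ 2 := by rw [← sin_sq_add_cos_sq r]; ring
  have hcI : cos r ∈ Icc (0 : ℝ) 1 := ⟨(cos_pos_of_mem_Ioo ⟨by linarith, hr⟩).le, cos_le_one r⟩
  have hc1 : cos r < 1 := by nlinarith
  have hK : 4 * m ^ 2 ≤ (k + m) ^ 2 * (1 - cos r ^ 2) := by
    have h : 2 * m ≤ (k + m) * sin r := hsin.trans (by nlinarith)
    rw [hsc]; nlinarith [pow_le_pow_left₀ (by linarith) h 2]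
  have hp'c : (1 - cos r ^ 2) * deriv p (cos r) ^ 2 ≤ (k + m) ^ 2 := by
    have := hp.energy_le hn hcI
    have : 0 ≤ (k : ℝ) * (k + n - 2) * p (cos r) ^ 2 := by
      have : (0 : ℝ) ≤ k + n - 2 := by linarith
      positivity
    nlinarith
  calc (1 - t ^ 2) ^ m * p t ^ 2 ≤ 5 * (1 - cos r ^ 2) ^ m :=
        one_sub_sq_rpow_mul_sq_le_of_ode hp.hasDerivAt hp.hasDerivAt_deriv
          (fun x => by rw [hp.ode x, hnm]; ring) hm hcI.1 hc1 hK
          (hp.sq_le_one hn hk hcI) hp'c ⟨ht0, ht⟩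
    _ ≤ 5 * (r ^ 2) ^ m := by
        rw [hsc]
        gcongr
        exact sin_le hr0.le

theorem arccos_rpow_mul_abs_le (hp : IsLegendre n k p) {m : ℝ} (hnm : (n : ℝ) = 2 * m + 2)
    (hm : 1 / 2 ≤ m) (hk : 1 ≤ k) {t : ℝ} (ht : t ∈ Icc (0 : ℝ) 1) :
    arccos t ^ m * |p t| ≤ (5 * π ^ 2 * m / (2 * k)) ^ m := by
  set r := π * m / k
  set θ := arccos t
  have hn : 2 ≤ n := by exact_mod_cast (show (2 : ℝ) ≤ n by linarith)
  have hr0 : 0 < r := by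
    have : (0 : ℝ) < k := by exact_mod_cast hk
    positivity
  have hθ0 : 0 ≤ θ := arccos_nonneg t
  have hθ : θ ≤ π / 2 := arccos_le_pi_div_two.2 ht.1
  have hp1 : |p t| ≤ 1 := (sq_le_one_iff_abs_le_one _).1 (hp.sq_le_one hn hk ht)
  have hA : 5 * π ^ 2 * m / (2 * k) = 5 * π / 2 * r := by simp only [r]; ring
  rw [hA]
  rcases le_or_gt θ r with hθr | hrθ
  · calc θ ^ m * |p t| ≤ θ ^ m := mul_le_of_le_one_right (by positivity) hp1
      _ ≤ (5 * π / 2 * r) ^ m := by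
          gcongr
          nlinarith [pi_gt_three]
  have hszego : (1 - t ^ 2) ^ m * p t ^ 2 ≤ 5 * (r ^ 2) ^ m := by
    refine hp.one_sub_sq_rpow_mul_sq_le hnm hm hk (hrθ.trans_le hθ) ht.1 ?_
    rw [← cos_arccos (by linarith [ht.1]) ht.2]
    exact cos_le_cos_of_nonneg_of_le_pi hr0.le (arccos_le_pi t) hrθ.le
  have hsinθ : (2 / π * θ) ^ 2 ≤ 1 - t ^ 2 := by
    rw [← sq_sqrt (by nlinarith [ht.1, ht.2] : 0 ≤ 1 - t ^ 2), ← sin_arccos]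
    exact pow_le_pow_left₀ (by positivity) (mul_le_sin hθ0 hθ) 2
  have h25 : (5 : ℝ) ≤ 25 ^ m := by
    calc (5 : ℝ) = 25 ^ (1 / 2 : ℝ) := by
          rw [show (25 : ℝ) = 5 ^ (2 : ℝ) by norm_num, ← rpow_mul (by norm_num)]; norm_num
      _ ≤ 25 ^ m := rpow_le_rpow_of_exponent_le (by norm_num) hm
  have hsq : (θ ^ m * |p t|) ^ 2 ≤ ((5 * π / 2 * r) ^ m) ^ 2 := by
    have e1 : (θ ^ m * |p t|) ^ 2 = ((π / 2) ^ 2) ^ m * (((2 / π * θ) ^ 2) ^ m * p t ^ 2) := by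
      rw [mul_pow, sq_abs, rpow_pow_comm hθ0, ← mul_assoc,
        ← mul_rpow (by positivity) (by positivity)]
      congr 3
      field_simp
    have e2 : ((5 * π / 2 * r) ^ m) ^ 2 = ((π / 2) ^ 2) ^ m * (25 ^ m * (r ^ 2) ^ m) := by
      rw [rpow_pow_comm (by positivity), ← mul_rpow (by norm_num) (by positivity),
        ← mul_rpow (by positivity) (by positivity)]
      ring_nf
    rw [e1, e2]
    refine mul_le_mul_of_nonneg_left ?_ (by positivity)
    calc ((2 / π * θ) ^ 2) ^ m * p t ^ 2 ≤ (1 - t ^ 2) ^ m * p t ^ 2 := by gcongr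
      _ ≤ 5 * (r ^ 2) ^ m := hszego
      _ ≤ 25 ^ m * (r ^ 2) ^ m := by gcongr
  exact (pow_le_pow_iff_left₀ (by positivity) (by positivity) two_ne_zero).1 hsq

end IsLegendre

theorem integral_le_of_measureReal_le_rpow {X : Type*} [MeasurableSpace X] {ν : Measure X}
    [IsFiniteMeasure ν] {f : X → ℝ} {D β : ℝ} (hf : AEStronglyMeasurable f ν)
    (hf0 : 0 ≤ᵐ[ν] f) (hf1 : f ≤ᵐ[ν] 1) (hβ : β < 1)
    (htail : ∀ s ∈ Ioc (0 : ℝ) 1, ν.real {x | s ≤ f x} ≤ D * s ^ (-β)) :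
    ∫ x, f x ∂ν ≤ D / (1 - β) := by
  have hint : Integrable f ν := Integrable.of_bound hf 1 (by
    filter_upwards [hf0, hf1] with x h0 h1
    exact abs_le.2 ⟨by linarith [show (0 : ℝ) ≤ f x from h0], h1⟩)
  have htail_meas : Measurable fun s : ℝ => ν.real {x | s ≤ f x} :=
    Antitone.measurable fun s t hst => measureReal_mono fun x hx => le_trans hst hx
  rw [hint.integral_eq_integral_Ioc_meas_le hf0 hf1]
  calc ∫ s in Ioc 0 1, ν.real {x | s ≤ f x}
      ≤ ∫ s in Ioc 0 1, D * s ^ (-β) := by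
        refine setIntegral_mono_on ?_ ?_ measurableSet_Ioc htail
        · refine Measure.integrableOn_of_bounded (M := ν.real univ) measure_Ioc_lt_top.ne
            htail_meas.aestronglyMeasurable (Filter.Eventually.of_forall fun s => ?_)
          rw [Real.norm_of_nonneg measureReal_nonneg]
          exact measureReal_mono (subset_univ _)
        · exact (intervalIntegral.intervalIntegrable_rpow' (by linarith)).1.const_mul D
    _ = D / (1 - β) := by
        rw [← intervalIntegral.integral_of_le zero_le_one, intervalIntegral.integral_const_mul,
          integral_rpow (Or.inl (by linarith)), zero_rpow (by linarith), one_rpow]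
        ring_nf

theorem integral_le_of_rpow_mul_le {X : Type*} [MeasurableSpace X] {ν : Measure X}
    [IsFiniteMeasure ν] {f θ : X → ℝ} {m α B C : ℝ} (hf : AEStronglyMeasurable f ν)
    (hf0 : 0 ≤ᵐ[ν] f) (hf1 : f ≤ᵐ[ν] 1) (hm : 0 < m) (hα : α < m) (hB : 0 < B) (hC : 0 ≤ C)
    (hθf : ∀ᵐ x ∂ν, θ x ^ m * f x ≤ B)
    (hcap : ∀ ρ, 0 < ρ → ν {x | θ x < ρ} ≤ ENNReal.ofReal (C * ρ ^ α)) :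
    ∫ x, f x ∂ν ≤ C * 2 ^ α * B ^ (α / m) / (1 - α / m) := by
  refine integral_le_of_measureReal_le_rpow hf hf0 hf1 ((div_lt_one hm).2 hα) fun s hs => ?_
  have hs0 : 0 < s := hs.1
  set ρ := 2 * (B / s) ^ m⁻¹
  have hρ : 0 < ρ := by positivity
  have hsub : {x | s ≤ f x} ≤ᵐ[ν] {x | θ x < ρ} := by
    filter_upwards [hθf] with x hx hsx
    change s ≤ f x at hsx
    change θ x < ρ
    rcases lt_or_ge (θ x) 0 with hneg | hθ0
    · exact hneg.trans hρ
    have hle : θ x ^ m ≤ B / s := by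
      rw [le_div_iff₀ hs0]
      exact (mul_le_mul_of_nonneg_left hsx (by positivity)).trans hx
    calc θ x = (θ x ^ m) ^ m⁻¹ := by rw [← rpow_mul hθ0, mul_inv_cancel₀ hm.ne', rpow_one]
      _ ≤ (B / s) ^ m⁻¹ := by gcongr
      _ < ρ := by simp only [ρ]; linarith [show 0 < (B / s) ^ m⁻¹ by positivity]
  calc ν.real {x | s ≤ f x} ≤ C * ρ ^ α :=
        ENNReal.toReal_le_of_le_ofReal (by positivity) ((measure_mono_ae hsub).trans (hcap ρ hρ))
    _ = C * 2 ^ α * B ^ (α / m) * s ^ (-(α / m)) := by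
        simp only [ρ]
        rw [mul_rpow zero_le_two (by positivity), ← rpow_mul (by positivity),
          div_rpow hB.le hs0.le, rpow_neg hs0.le, inv_mul_eq_div]
        ring

theorem abs_integral_posPart_sub_integral_negPart_le {X : Type*} [MeasurableSpace X]
    (μ : SignedMeasure X) {g : X → ℝ} (hg : Integrable g μ.totalVariation) :
    |(∫ x, g x ∂μ.toJordanDecomposition.posPart) - ∫ x, g x ∂μ.toJordanDecomposition.negPart|
      ≤ ∫ x, |g x| ∂μ.totalVariation := by
  have hpos := hg.mono_measure (Measure.le_add_right le_rfl)
  have hneg := hg.mono_measure (Measure.le_add_left le_rfl)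
  rw [SignedMeasure.totalVariation, integral_add_measure hpos.abs hneg.abs]
  exact (abs_sub _ _).trans (add_le_add abs_integral_le_integral_abs abs_integral_le_integral_abs)

theorem measure_arccos_lt_le {X : Type*} [MeasurableSpace X] {ν : Measure X} {S : Set X}
    {τ : X → ℝ} {C α ρ : ℝ} (hC : 0 ≤ C) (hα : 0 ≤ α) (hρ : 0 ≤ ρ)
    (hsupp : ∀ᵐ x ∂ν, x ∈ S ∧ 0 ≤ τ x)
    (hcap : ∀ r, 0 ≤ r → ν {x | x ∈ S ∧ cos r < τ x} ≤ ENNReal.ofReal (C * r ^ α)) :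
    ν {x | arccos (τ x) < ρ} ≤ ENNReal.ofReal (C * ρ ^ α) := by
  -- `cos` decreases only on `[0, π]`, so compare with the cap of radius `min ρ π`.
  set r := min ρ π
  have hr : 0 ≤ r := le_min hρ pi_pos.le
  have hsub : {x | arccos (τ x) < ρ} ≤ᵐ[ν] {x | x ∈ S ∧ cos r < τ x} := by
    filter_upwards [hsupp] with x ⟨hxS, hx⟩ hxρ
    refine ⟨hxS, ?_⟩
    rcases le_or_gt (τ x) 1 with h1 | h1
    · have : arccos (τ x) < r :=
        lt_min hxρ ((arccos_le_pi_div_two.2 hx).trans_lt (by linarith [pi_pos]))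
      calc cos r < cos (arccos (τ x)) :=
            cos_lt_cos_of_nonneg_of_le_pi (arccos_nonneg _) (min_le_right _ _) this
        _ = τ x := cos_arccos (by linarith) h1
    · exact (cos_le_one r).trans_lt h1
  calc _ ≤ _ := measure_mono_ae hsub
    _ ≤ ENNReal.ofReal (C * r ^ α) := hcap r hr
    _ ≤ ENNReal.ofReal (C * ρ ^ α) := by
        gcongr
        exact min_le_left _ _

theorem multiplier_decay_general (n : ℕ) (hn : 3 ≤ n) (α C : ℝ) (hα0 : 0 ≤ α)
    (hα : α < ((n : ℝ) - 2) / 2) (hC : 0 < C)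
    (e : EuclideanSpace ℝ (Fin n)) (he : ‖e‖ = 1)
    (μ : SignedMeasure (EuclideanSpace ℝ (Fin n)))
    (hsupp : μ.totalVariation
      {u | u ∈ Metric.sphere (0 : EuclideanSpace ℝ (Fin n)) 1 ∧ 0 ≤ (inner ℝ e u : ℝ)}ᶜ = 0)
    (hcap : ∀ r : ℝ, 0 ≤ r →
      μ.totalVariation
        {u | u ∈ Metric.sphere (0 : EuclideanSpace ℝ (Fin n)) 1 ∧
          Real.cos r < (inner ℝ e u : ℝ)} ≤ ENNReal.ofReal (C * r ^ α))
    (P : ℕ → ℝ → ℝ) (hP : ∀ k, IsLegendre n k (P k)) :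
    ∃ M : ℝ, ∀ k : ℕ, 1 ≤ k →
      |(∫ u, P k ((inner ℝ e u : ℝ)) ∂μ.toJordanDecomposition.posPart) -
          ∫ u, P k ((inner ℝ e u : ℝ)) ∂μ.toJordanDecomposition.negPart| ≤
        M * (k : ℝ) ^ (-α) := by
  set m : ℝ := ((n : ℝ) - 2) / 2
  have hm : 1 / 2 ≤ m := by
    have : (3 : ℝ) ≤ n := by exact_mod_cast hn
    simp only [m]; linarith
  have hnm : (n : ℝ) = 2 * m + 2 := by simp only [m]; ring
  have hsupp' : ∀ᵐ u ∂μ.totalVariation, u ∈ Metric.sphere 0 1 ∧ 0 ≤ (inner ℝ e u : ℝ) :=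
    ae_iff.2 hsupp
  have hI : ∀ᵐ u ∂μ.totalVariation, (inner ℝ e u : ℝ) ∈ Icc (0 : ℝ) 1 := by
    filter_upwards [hsupp'] with u ⟨hu, hu0⟩
    refine ⟨hu0, (real_inner_le_norm e u).trans ?_⟩
    rw [he, mem_sphere_zero_iff_norm.1 hu, one_mul]
  refine ⟨C * 2 ^ α * (5 * π ^ 2 * m / 2) ^ α / (1 - α / m), fun k hk => ?_⟩
  have hmeas : AEStronglyMeasurable (fun u => P k (inner ℝ e u)) μ.totalVariation :=
    ((hP k).continuous.comp (continuous_const.inner continuous_id)).aestronglyMeasurable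
  have hbound : ∀ᵐ u ∂μ.totalVariation, |P k (inner ℝ e u)| ≤ 1 := by
    filter_upwards [hI] with u hu
    exact (sq_le_one_iff_abs_le_one _).1 ((hP k).sq_le_one (by omega) hk hu)
  calc _ ≤ ∫ u, |P k (inner ℝ e u)| ∂μ.totalVariation :=
        abs_integral_posPart_sub_integral_negPart_le μ (Integrable.of_bound hmeas 1 hbound)
    _ ≤ C * 2 ^ α * ((5 * π ^ 2 * m / (2 * k)) ^ m) ^ (α / m) / (1 - α / m) :=
        integral_le_of_rpow_mul_le (θ := fun u => arccos (inner ℝ e u)) hmeas.norm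
          (ae_of_all _ fun _ => abs_nonneg _) hbound (by linarith) hα (by positivity) hC.le
          (by filter_upwards [hI] with u hu
              exact (hP k).arccos_rpow_mul_abs_le hnm hm hk hu)
          (fun ρ hρ => measure_arccos_lt_le hC.le hα0 hρ.le hsupp' hcap)
    _ = _ := by
        have hk0 : (0 : ℝ) < k := by exact_mod_cast hk
        rw [← rpow_mul (by positivity), mul_div_cancel₀ _ (by linarith),
          show 5 * π ^ 2 * m / (2 * k) = 5 * π ^ 2 * m / 2 * (k : ℝ)⁻¹ by ring,
          mul_rpow (by positivity) (by positivity), inv_rpow hk0.le, ← rpow_neg hk0.le]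
        ring

/-- Let `μ` be a finite signed zonal Borel measure on `S^{n-1}` supported in the closed
upper hemisphere, with `|μ|({u : ⟨e,u⟩ > cos r}) ≤ C·r^α` for all `r ≥ 0`, where
`0 ≤ α < (n-2)/2`. Then the Fourier–Legendre coefficients
`aⁿₖ[μ] = ∫ Pⁿₖ(⟨e,u⟩) dμ(u)` satisfy `aⁿₖ[μ] = O(k^{-α})` as `k → ∞`. -/
theorem multiplier_decay (n : ℕ) (hn : 3 ≤ n) (α C : ℝ) (hα0 : 0 ≤ α)
    (hα : α < ((n : ℝ) - 2) / 2) (hC : 0 < C)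
    (e : EuclideanSpace ℝ (Fin n)) (he : ‖e‖ = 1)
    (μ : SignedMeasure (EuclideanSpace ℝ (Fin n)))
    (hsupp : μ.totalVariation
      {u | u ∈ Metric.sphere (0 : EuclideanSpace ℝ (Fin n)) 1 ∧ 0 ≤ (inner ℝ e u : ℝ)}ᶜ = 0)
    (hzonal : ∀ R : EuclideanSpace ℝ (Fin n) ≃ₗᵢ[ℝ] EuclideanSpace ℝ (Fin n),
      R e = e → μ.map R = μ)
    (hcap : ∀ r : ℝ, 0 ≤ r →
      μ.totalVariation
        {u | u ∈ Metric.sphere (0 : EuclideanSpace ℝ (Fin n)) 1 ∧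
          Real.cos r < (inner ℝ e u : ℝ)} ≤ ENNReal.ofReal (C * r ^ α))
    (P : ℕ → ℝ → ℝ) (hP : ∀ k, IsLegendre n k (P k)) :
    ∃ M : ℝ, ∀ k : ℕ, 1 ≤ k →
      |(∫ u, P k ((inner ℝ e u : ℝ)) ∂μ.toJordanDecomposition.posPart) -
          ∫ u, P k ((inner ℝ e u : ℝ)) ∂μ.toJordanDecomposition.negPart| ≤
        M * (k : ℝ) ^ (-α) :=
  multiplier_decay_general n hn α C hα0 hα hC e he μ hsupp hcap P hP
end
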